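/- Let A ∈ ℝ^{n×n}, b, x_0 ∈ ℝ^n, r_0 = b − A x_0, and K_j = span{r_0, A r_0, ..., A^{j-1} r_0}. Suppose L_{k+1} ∈ ℝ^{n×(k+1)} has full column rank with column space equal to K_{k+1}, with QR factorization L_{k+1} = Q_{k+1} R_{k+1} (Q_{k+1} with orthonormal columns, R_{k+1} invertible upper triangular). Let x_k^C ∈ x_0 + K_k satisfy ‖L_{k+1}†(b − A x_k^C)‖ ≤ ‖L_{k+1}†(b − A x)‖ for all x ∈ x_0 + K_k, and let x_k^G ∈ x_0 + K_k be arbitrary with r_k^G = b − A x_k^G. Writing r_k^C = b − A x_k^C = L_{k+1} u_k^C (which is possible since r_k^C ∈ K_{k+1}), it holds that ‖u_k^C‖ ≤ ‖R_{k+1}^{-1}‖ ‖r_k^G‖, where ‖·‖ on vectors is the Euclidean norm and on matrices the spectral norm. -/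

import Mathlib

open Matrix

/-- The Euclidean norm of a real vector. -/
noncomputable def enorm {ι : Type*} [Fintype ι] (v : ι → ℝ) : ℝ :=
  Real.sqrt (∑ i, (v i) ^ 2)

/-- The spectral norm (operator 2-norm) of a real matrix. -/
noncomputable def spec {α β : Type*} [Fintype α] [Fintype β] [DecidableEq β]
    (M : Matrix α β ℝ) : ℝ :=
  ‖LinearMap.toContinuousLinearMap (Matrix.toEuclideanLin M)‖

/-- The Moore–Penrose pseudoinverse of a full-column-rank real matrix,
`L† = (LᵀL)⁻¹Lᵀ`. -/
noncomputable def pinv {α β : Type*} [Fintype α] [Fintype β] [DecidableEq β]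
    (L : Matrix α β ℝ) : Matrix β α ℝ :=
  (Lᵀ * L)⁻¹ * Lᵀ

/-- Full column rank: the columns are linearly independent. -/
def fullColRank {α β : Type*} (M : Matrix α β ℝ) : Prop :=
  LinearIndependent ℝ (fun j : β => fun i : α => M i j)

/-- The column space of a matrix. -/
def colSpace {α β : Type*} (M : Matrix α β ℝ) : Submodule ℝ (α → ℝ) :=
  Submodule.span ℝ (Set.range fun j : β => fun i : α => M i j)

/-- The Krylov subspace `K_j = span{r, A r, ..., A^{j-1} r}`. -/
noncomputable def krylov {n : ℕ} (A : Matrix (Fin n) (Fin n) ℝ) (r : Fin n → ℝ) (j : ℕ) :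
    Submodule ℝ (Fin n → ℝ) :=
  Submodule.span ℝ (Set.range fun i : Fin j => (A ^ (i : ℕ)).mulVec r)


lemma enorm_eq_norm {ι : Type*} [Fintype ι] (v : ι → ℝ) :
    _root_.enorm v = ‖(WithLp.equiv 2 (ι → ℝ)).symm v‖ := by
  rw [EuclideanSpace.norm_eq]
  simp [_root_.enorm, Real.norm_eq_abs, sq_abs]

lemma enorm_mulVec_le {α β : Type*} [Fintype α] [Fintype β] [DecidableEq β]
    (M : Matrix α β ℝ) (v : β → ℝ) :
    _root_.enorm (M.mulVec v) ≤ spec M * _root_.enorm v := by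
  rw [enorm_eq_norm, enorm_eq_norm, WithLp.equiv_symm_apply, WithLp.equiv_symm_apply,
    ← Matrix.toEuclideanLin_apply_piLp_toLp]
  simpa [spec] using
    (LinearMap.toContinuousLinearMap (Matrix.toEuclideanLin M)).le_opNorm
      ((WithLp.equiv 2 (β → ℝ)).symm v)

lemma enorm_sq {ι : Type*} [Fintype ι] (v : ι → ℝ) :
    _root_.enorm v ^ 2 = v ⬝ᵥ v := by
  rw [_root_.enorm, Real.sq_sqrt (Finset.sum_nonneg fun i _ => sq_nonneg _)]
  simp [dotProduct, sq]

lemma enorm_nonneg' {ι : Type*} [Fintype ι] (v : ι → ℝ) : 0 ≤ _root_.enorm v :=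
  Real.sqrt_nonneg _

lemma dot_le_enorm_mul {ι : Type*} [Fintype ι] (v w : ι → ℝ) :
    v ⬝ᵥ w ≤ _root_.enorm v * _root_.enorm w := by
  rw [enorm_eq_norm, enorm_eq_norm]
  have h : v ⬝ᵥ w =
      inner ℝ ((WithLp.equiv 2 (ι → ℝ)).symm v) ((WithLp.equiv 2 (ι → ℝ)).symm w) := by
    simp [dotProduct, PiLp.inner_apply, RCLike.inner_apply, mul_comm]
  rw [h]
  exact real_inner_le_norm _ _

lemma orth_mulVec_enorm {α β : Type*} [Fintype α] [Fintype β] [DecidableEq β]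
    (Q : Matrix α β ℝ) (hQ : Qᵀ * Q = 1) (w : β → ℝ) :
    _root_.enorm (Q.mulVec w) = _root_.enorm w := by
  have h2 : _root_.enorm (Q.mulVec w) ^ 2 = _root_.enorm w ^ 2 := by
    rw [enorm_sq, enorm_sq, Matrix.dotProduct_mulVec, ← Matrix.mulVec_transpose,
      Matrix.mulVec_mulVec, hQ, Matrix.one_mulVec]
  rw [← Real.sqrt_sq (enorm_nonneg' (Q.mulVec w)), h2, Real.sqrt_sq (enorm_nonneg' w)]

lemma orth_transpose_mulVec_le {α β : Type*} [Fintype α] [Fintype β] [DecidableEq β]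
    (Q : Matrix α β ℝ) (hQ : Qᵀ * Q = 1) (v : α → ℝ) :
    _root_.enorm (Qᵀ.mulVec v) ≤ _root_.enorm v := by
  set w := Qᵀ.mulVec v with hw
  have key : _root_.enorm w ^ 2 ≤ _root_.enorm w * _root_.enorm v := by
    calc _root_.enorm w ^ 2 = w ⬝ᵥ Qᵀ.mulVec v := by rw [enorm_sq, hw]
      _ = Q.mulVec w ⬝ᵥ v := by
          rw [Matrix.dotProduct_mulVec, ← Matrix.mulVec_transpose, Matrix.transpose_transpose]
      _ ≤ _root_.enorm (Q.mulVec w) * _root_.enorm v := dot_le_enorm_mul _ _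
      _ = _root_.enorm w * _root_.enorm v := by rw [orth_mulVec_enorm Q hQ]
  rcases (enorm_nonneg' w).eq_or_lt with h | h
  · rw [← h]; exact enorm_nonneg' v
  · have := key
    rw [sq] at this
    exact le_of_mul_le_mul_left this h

/-- the key intermediate estimate in the CMRH–GMRES residual bound:
writing the CMRH residual as `r_k^C = L_{k+1} u_k^C`, one has
`‖u_k^C‖ ≤ ‖R_{k+1}⁻¹‖ ‖r_k^G‖` for any `x_k^G ∈ x₀ + K_k`. -/
theorem cmrh_coefficient_bound (n k : ℕ) (A : Matrix (Fin n) (Fin n) ℝ)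
    (b x0 : Fin n → ℝ)
    (L1 Q1 : Matrix (Fin n) (Fin (k+1)) ℝ)
    (R1 : Matrix (Fin (k+1)) (Fin (k+1)) ℝ)
    (hL : fullColRank L1)
    (hcol : colSpace L1 = krylov A (b - A.mulVec x0) (k+1))
    (hQR : L1 = Q1 * R1) (hQorth : Q1ᵀ * Q1 = 1)
    (hRunit : IsUnit R1) (hRtri : ∀ i j : Fin (k+1), j < i → R1 i j = 0)
    (xC xG : Fin n → ℝ)
    (hxC : xC - x0 ∈ krylov A (b - A.mulVec x0) k)
    (hxG : xG - x0 ∈ krylov A (b - A.mulVec x0) k)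
    (hCopt : ∀ x : Fin n → ℝ, x - x0 ∈ krylov A (b - A.mulVec x0) k →
      _root_.enorm ((pinv L1).mulVec (b - A.mulVec xC)) ≤
        _root_.enorm ((pinv L1).mulVec (b - A.mulVec x)))
    (u : Fin (k+1) → ℝ)
    (hu : b - A.mulVec xC = L1.mulVec u) :
    _root_.enorm u ≤ spec R1⁻¹ * _root_.enorm (b - A.mulVec xG) := by
  have hdet : IsUnit R1.det := (Matrix.isUnit_iff_isUnit_det R1).mp hRunit
  have hdetT : IsUnit R1ᵀ.det := by rwa [Matrix.det_transpose]
  have hRR : R1⁻¹ * R1 = 1 := Matrix.nonsing_inv_mul R1 hdet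
  have hRTR : R1ᵀ⁻¹ * R1ᵀ = 1 := Matrix.nonsing_inv_mul R1ᵀ hdetT
  have hpinv : pinv L1 = R1⁻¹ * Q1ᵀ := by
    rw [pinv, hQR, Matrix.transpose_mul]
    have h1 : R1ᵀ * Q1ᵀ * (Q1 * R1) = R1ᵀ * R1 := by
      rw [Matrix.mul_assoc, ← Matrix.mul_assoc Q1ᵀ, hQorth, Matrix.one_mul]
    rw [h1, Matrix.mul_inv_rev, Matrix.mul_assoc, ← Matrix.mul_assoc R1ᵀ⁻¹, hRTR,
      Matrix.one_mul]
  have hpL : pinv L1 * L1 = 1 := by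
    rw [hpinv, hQR, Matrix.mul_assoc, ← Matrix.mul_assoc Q1ᵀ, hQorth, Matrix.one_mul, hRR]
  have hueq : u = (pinv L1).mulVec (b - A.mulVec xC) := by
    rw [hu, Matrix.mulVec_mulVec, hpL, Matrix.one_mulVec]
  calc _root_.enorm u = _root_.enorm ((pinv L1).mulVec (b - A.mulVec xC)) := by rw [← hueq]
    _ ≤ _root_.enorm ((pinv L1).mulVec (b - A.mulVec xG)) := hCopt xG hxG
    _ = _root_.enorm (R1⁻¹.mulVec (Q1ᵀ.mulVec (b - A.mulVec xG))) := by
        rw [hpinv, ← Matrix.mulVec_mulVec]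
    _ ≤ spec R1⁻¹ * _root_.enorm (Q1ᵀ.mulVec (b - A.mulVec xG)) := enorm_mulVec_le _ _
    _ ≤ spec R1⁻¹ * _root_.enorm (b - A.mulVec xG) :=
        mul_le_mul_of_nonneg_left (orth_transpose_mulVec_le Q1 hQorth _) (norm_nonneg _)
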